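/- Let H = ([n_H], E_H) be a graph with m_H = |E_H| and G the roommates instance constructed from H as described. For every integer 1 ≤ k ≤ n_H, H admits a vertex cover of size k if and only if G admits a popular matching of size at least m_H + 2n_H − k. -/

import Mathlib

open scoped Classical

/-- A roommates instance: a (finite) graph `(V, adj)` together with a raw preference
relation: `pref u v w` means vertex `u` strictly prefers its neighbor `v` to its
neighbor `w`. -/
structure RoommatesInstance (V : Type) where
  adj : V → V → Prop
  adj_symm : ∀ u v, adj u v → adj v u
  adj_irrefl : ∀ u, ¬ adj u u
  pref : V → V → V → Prop

namespace RoommatesInstance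

variable {V : Type}

/-- The preference relation of each vertex is a strict linear order on its neighbors. -/
def StrictPrefs (G : RoommatesInstance V) : Prop :=
  (∀ u v w, G.pref u v w → G.adj u v ∧ G.adj u w) ∧
  (∀ u v w x, G.pref u v w → G.pref u w x → G.pref u v x) ∧
  (∀ u v w, G.pref u v w → ¬ G.pref u w v) ∧
  (∀ u v w, G.adj u v → G.adj u w → v ≠ w → G.pref u v w ∨ G.pref u w v)

/-- A matching, encoded by the partner function of the corresponding perfect matching
`M̃` of `G̃` (the graph `G` with a self-loop added at every vertex): `m u = u` means
that `u` is unmatched in `M`, i.e. matched to itself along its self-loop in `M̃`. -/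
structure Matching (G : RoommatesInstance V) where
  m : V → V
  invol : ∀ u, m (m u) = u
  adj_of_ne : ∀ u, m u ≠ u → G.adj u (m u)

variable (G : RoommatesInstance V)

/-- `u` considers `v` strictly better than `w`, where each of `v`, `w` is either a
neighbor of `u` or `u` itself (`u` itself stands for being unmatched, which every
vertex ranks below all of its neighbors). -/
def Better (u v w : V) : Prop :=
  (w = u ∧ v ≠ u) ∨ (v ≠ u ∧ w ≠ u ∧ G.pref u v w)

/-- vertex `u` prefers matching `M` to matching `M'` -/
def Prefers (M M' : G.Matching) (u : V) : Prop :=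
  G.Better u (M.m u) (M'.m u)

/-- `φ(M,M')`: the number of vertices preferring `M` to `M'` -/
noncomputable def phi [Fintype V] (M M' : G.Matching) : ℕ :=
  (Finset.univ.filter fun u => G.Prefers M M' u).card

/-- `Δ(M,M') = φ(M,M') - φ(M',M)` -/
noncomputable def delta [Fintype V] (M M' : G.Matching) : ℤ :=
  (G.phi M M' : ℤ) - (G.phi M' M : ℤ)

/-- a matching `M` is popular if it never loses a head-to-head election -/
def Popular [Fintype V] (M : G.Matching) : Prop :=
  ∀ M' : G.Matching, 0 ≤ G.delta M M'

/-- `(u,v)` is a blocking edge to `M`: both endpoints prefer each other to their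
assignments in `M̃`. -/
def Blocks (M : G.Matching) (u v : V) : Prop :=
  G.adj u v ∧ G.Better u v (M.m u) ∧ G.Better v u (M.m v)

/-- `(u,v)` is a negative edge to `M`: both endpoints prefer their assignments in `M̃`
to each other. -/
def Negative (M : G.Matching) (u v : V) : Prop :=
  G.adj u v ∧ G.Better u (M.m u) v ∧ G.Better v (M.m v) u

/-- `cost_M` on the edges of `G̃`: `cost_M(u,v) = 2` for a blocking edge, `-2` for a
negative edge, `0` otherwise; `cost_M(u,u) = 0` if `u` is unmatched in `M` and `-1`
otherwise. -/
noncomputable def cost (M : G.Matching) (u v : V) : ℤ :=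
  if u = v then (if M.m u = u then 0 else -1)
  else if G.Blocks M u v then 2
  else if G.Negative M u v then -2
  else 0

/-- a stable matching: no blocking edge -/
def Stable (M : G.Matching) : Prop := ∀ u v, ¬ G.Blocks M u v

/-- the number of edges of a matching -/
noncomputable def msize [Fintype V] (M : G.Matching) : ℕ :=
  (Finset.univ.filter fun u => M.m u ≠ u).card / 2

theorem cost_comm (M : G.Matching) (u v : V) : G.cost M u v = G.cost M v u := by
  unfold cost
  rcases eq_or_ne u v with rfl | huv
  · rfl
  · rw [if_neg huv, if_neg (Ne.symm huv)]
    have hb : G.Blocks M u v ↔ G.Blocks M v u :=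
      ⟨fun ⟨h1, h2, h3⟩ => ⟨G.adj_symm _ _ h1, h3, h2⟩,
       fun ⟨h1, h2, h3⟩ => ⟨G.adj_symm _ _ h1, h3, h2⟩⟩
    have hn : G.Negative M u v ↔ G.Negative M v u :=
      ⟨fun ⟨h1, h2, h3⟩ => ⟨G.adj_symm _ _ h1, h3, h2⟩,
       fun ⟨h1, h2, h3⟩ => ⟨G.adj_symm _ _ h1, h3, h2⟩⟩
    simp only [hb, hn]

end RoommatesInstance

/-! ## The roommates instance `G` constructed from a vertex-cover instance `H` -/

/-- The vertex set of the roommates instance `G` built from a graph `H` on `Fin n`: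
vertices `a_i, b_i, c_i, d_i` for every vertex `i` of `H`, and a vertex
`u^e_i = U i j` for every edge `e = (i,j)` of `H` (so `U i j` is the vertex of the
edge `{i,j}` associated with endpoint `i`; for non-adjacent pairs `(i,j)` the vertex
`U i j` is isolated, hence irrelevant). -/
inductive GV (n : ℕ) where
  | A (i : Fin n) | B (i : Fin n) | C (i : Fin n) | D (i : Fin n) | U (i j : Fin n)
  deriving DecidableEq, Fintype

variable {n : ℕ}

/-- The edges of `G` (listed in one direction each):
`a_i` is adjacent to `b_i, c_i, d_i`; `b_i` is adjacent to `c_i` and to `u^e_i` for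
every edge `e` of `H` incident to `i`; and `u^e_i` is adjacent to `u^e_j` for every
edge `e = (i,j)` of `H`. -/
def grel (H : SimpleGraph (Fin n)) : GV n → GV n → Prop := fun x y =>
  (∃ i, x = GV.A i ∧ (y = GV.B i ∨ y = GV.C i ∨ y = GV.D i)) ∨
  (∃ i, x = GV.B i ∧ y = GV.C i) ∨
  (∃ i j, x = GV.B i ∧ y = GV.U i j ∧ H.Adj i j) ∨
  (∃ i j, x = GV.U i j ∧ y = GV.U j i ∧ H.Adj i j)

/-- Ranks encoding the preference lists of `G` (lower rank = more preferred):
`a_i : b_i ≻ c_i ≻ d_i`;  `b_i : a_i ≻ u^{e_1}_i ≻ ⋯ ≻ u^{e_k}_i ≻ c_i`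
(the `u^e_i`'s ordered by the index of the other endpoint of `e`);
`c_i : a_i ≻ b_i`;  `d_i : a_i`;  `u^e_i : u^e_j ≻ b_i`. -/
def grank : GV n → GV n → ℕ := fun x y =>
  match x, y with
  | GV.A _, GV.B _ => 0
  | GV.A _, GV.C _ => 1
  | GV.A _, GV.D _ => 2
  | GV.B _, GV.A _ => 0
  | GV.B _, GV.U _ k => 1 + k.val
  | GV.B _, GV.C _ => 1 + n
  | GV.C _, GV.A _ => 0
  | GV.C _, GV.B _ => 1
  | GV.D _, GV.A _ => 0
  | GV.U _ _, GV.U _ _ => 0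
  | GV.U _ _, GV.B _ => 1
  | _, _ => 0

/-- The roommates instance `G` constructed from the vertex cover instance `H`. -/
def GofH (H : SimpleGraph (Fin n)) : RoommatesInstance (GV n) where
  adj x y := x ≠ y ∧ (grel H x y ∨ grel H y x)
  adj_symm := fun _ _ h => ⟨h.1.symm, h.2.symm⟩
  adj_irrefl := fun _ h => h.1 rfl
  pref u v w :=
    (u ≠ v ∧ (grel H u v ∨ grel H v u)) ∧ (u ≠ w ∧ (grel H u w ∨ grel H w u)) ∧
      grank u v < grank u w


/-!
A vertex cover `K` of `H` yields the matching `M_K` made of `a_i b_i` for `i ∈ K`, of `a_i d_i` and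
`b_i c_i` for `i ∉ K`, and of all edges `u^e_i u^e_j`; it has `m_H + 2 n_H - |K|` edges. In an
election between `M_K` and any `M'`, the votes of the gadget `{a_i, b_i, c_i, d_i}` sum to at most
`0`, or to at most `2` when `i ∉ K` and `M'` matches `b_i` to some `u^e_i`. In the latter case both
`u`-vertices of `e = (i, j)` lose their partner and `j ∈ K`, so charging the gain of the gadget to
`e` leaves every edge with a non-positive total: `M_K` is popular.

Conversely, flipping short alternating paths shows that a popular matching `M` matches each `u^e_i`
to `u^e_j` and each gadget either as `a_i b_i` or as `a_i d_i, b_i c_i`. Hence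
`|M| = m_H + 2 n_H - |K|` for `K = {i | a_i b_i ∈ M}`, and `K` is a vertex cover: for an edge
`(i, j)` with both gadgets in the second state, flipping the path
`d_i a_i c_i b_i u^e_i u^e_j b_j c_j a_j d_j` wins by two votes. Any superset of `K` is again a
cover.
-/

namespace RoommatesInstance

variable {V : Type} {G : RoommatesInstance V}

theorem Matching.m_eq_comm (M : G.Matching) {u v : V} : M.m u = v ↔ M.m v = u :=
  ⟨fun h => h ▸ M.invol u, fun h => h ▸ M.invol v⟩

theorem Matching.m_eq_self_or_adj (M : G.Matching) (u : V) : M.m u = u ∨ G.adj u (M.m u) :=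
  or_iff_not_imp_left.2 (M.adj_of_ne u)

theorem Matching.m_eq_self_of_forall_adj (M : G.Matching) {u : V}
    (h : ∀ v, G.adj u v → M.m v ≠ u) : M.m u = u :=
  (M.m_eq_self_or_adj u).resolve_right fun hadj => h _ hadj (M.invol u)

variable (G) in
noncomputable def vote (M : G.Matching) (u v : V) : ℤ :=
  if G.Better u v (M.m u) then 1 else if G.Better u (M.m u) v then -1 else 0

noncomputable def Matching.rematch (M : G.Matching) (s : Finset V) (f : V → V)
    (hM : ∀ u ∈ s, M.m u ∈ s)
    (hf : ∀ u ∈ s, f u ∈ s ∧ f (f u) = u ∧ (f u ≠ u → G.adj u (f u))) : G.Matching where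
  m u := if u ∈ s then f u else M.m u
  invol u := by
    by_cases hu : u ∈ s
    · simp [hu, hf u hu]
    · have : M.m u ∉ s := fun h => hu (M.invol u ▸ hM _ h)
      simp [hu, this, M.invol]
  adj_of_ne u := by
    by_cases hu : u ∈ s
    · simpa [hu] using (hf u hu).2.2
    · simpa [hu] using M.adj_of_ne u

section Asymm

variable (hG : ∀ u v w, G.pref u v w → ¬ G.pref u w v)
include hG

theorem better_asymm {u v w : V} (h : G.Better u v w) : ¬ G.Better u w v := by
  rintro (⟨rfl, -⟩ | ⟨hw, -, h'⟩)
  · rcases h with ⟨-, h⟩ | ⟨h, -⟩ <;> exact h rfl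
  · rcases h with ⟨rfl, -⟩ | ⟨-, -, h⟩
    exacts [hw rfl, hG _ _ _ h h']

theorem vote_partner (M : G.Matching) (u : V) : G.vote M u (M.m u) = 0 := by
  have : ¬ G.Better u (M.m u) (M.m u) := fun h => better_asymm hG h h
  simp [vote, this]

theorem delta_eq_neg_sum_vote [Fintype V] (M M' : G.Matching) :
    G.delta M M' = -∑ u, G.vote M u (M'.m u) := by
  have key : ∀ u, G.vote M u (M'.m u) =
      (if G.Prefers M' M u then 1 else 0) - (if G.Prefers M M' u then 1 else 0) := by
    intro u
    unfold vote Prefers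
    by_cases h : G.Better u (M'.m u) (M.m u)
    · simp [h, better_asymm hG h]
    · by_cases h' : G.Better u (M.m u) (M'.m u) <;> simp [h, h']
  simp only [key, Finset.sum_sub_distrib, Finset.sum_boole, delta, phi]
  ring

theorem popular_iff_sum_vote_nonpos [Fintype V] (M : G.Matching) :
    G.Popular M ↔ ∀ M' : G.Matching, ∑ u, G.vote M u (M'.m u) ≤ 0 := by
  simp only [Popular, delta_eq_neg_sum_vote hG, neg_nonneg]

theorem not_popular_of_rematch [Fintype V] {M : G.Matching} {s : Finset V} {f : V → V}
    (hM : ∀ u ∈ s, M.m u ∈ s)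
    (hf : ∀ u ∈ s, f u ∈ s ∧ f (f u) = u ∧ (f u ≠ u → G.adj u (f u)))
    (hwin : 0 < ∑ u ∈ s, G.vote M u (f u)) : ¬ G.Popular M := by
  intro hpop
  have : ∑ u, G.vote M u ((M.rematch s f hM hf).m u) = ∑ u ∈ s, G.vote M u (f u) := by
    rw [← Finset.sum_subset (Finset.subset_univ s)]
    · exact Finset.sum_congr rfl fun u hu => by simp [Matching.rematch, hu]
    · intro u _ hu
      simp [Matching.rematch, hu, vote_partner hG]
  linarith [(popular_iff_sum_vote_nonpos hG M).1 hpop (M.rematch s f hM hf)]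

theorem not_popular_of_blocks_of_unmatched [Fintype V] {M : G.Matching} {x y : V}
    (hxy : G.Blocks M x y) (hy : M.m y = y) : ¬ G.Popular M := by
  obtain ⟨hadj, hx, -⟩ := hxy
  have hne : x ≠ y := fun h => G.adj_irrefl x (h ▸ hadj)
  have hyx : G.Better y x y := Or.inl ⟨rfl, hne⟩
  by_cases hxx : M.m x = x
  · refine not_popular_of_rematch hG (s := {x, y}) (f := Equiv.swap x y) ?_ ?_ ?_
    · simp [hxx, hy]
    · simp [Equiv.swap_apply_def, hne, hne.symm, hadj, G.adj_symm _ _ hadj]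
    · simp [hne, vote, hx, hyx, hy]
  · have hzy : M.m x ≠ y := fun h => hne ((M.m_eq_comm.1 h).symm.trans hy)
    have hz : G.Better (M.m x) x (M.m x) := Or.inl ⟨rfl, fun h => hxx (M.m_eq_comm.1 h.symm)⟩
    refine not_popular_of_rematch hG (s := {x, y, M.m x}) (f := Equiv.swap x y) ?_ ?_ ?_
    · simp [M.invol, hy]
    · simp [Equiv.swap_apply_def, hne, hne.symm, hadj, G.adj_symm _ _ hadj, hxx, hzy, Ne.symm hxx]
    · rw [Finset.sum_insert (by simp [hne, Ne.symm hxx]), Finset.sum_pair (Ne.symm hzy)]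
      simp [vote, hx, hyx, hy, M.invol, better_asymm hG hz, hz,
        Equiv.swap_apply_of_ne_of_ne hxx hzy]

end Asymm

end RoommatesInstance

theorem sum_nonpos_of_add_swap_nonpos {α : Type*} [Fintype α] {F : α × α → ℤ}
    (h : ∀ p, F p + F p.swap ≤ 0) : ∑ p, F p ≤ 0 := by
  have hswap : ∑ p : α × α, F p.swap = ∑ p, F p :=
    Fintype.sum_equiv (Equiv.prodComm α α) _ _ fun _ => rfl
  have := Finset.sum_le_sum (s := Finset.univ) fun p _ => h p
  rw [Finset.sum_add_distrib, hswap, Finset.sum_const_zero] at this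
  linarith

open Finset in
theorem SimpleGraph.card_filter_adj_eq_two_mul_card_edgeFinset {V : Type*} [Fintype V]
    (G : SimpleGraph V) [DecidableRel G.Adj] :
    #(univ.filter fun p : V × V => G.Adj p.1 p.2) = 2 * #G.edgeFinset := by
  rw [← G.dart_card_eq_twice_card_edges, ← Fintype.card_subtype]
  exact Fintype.card_congr
    ⟨fun p => ⟨p.1, p.2⟩, fun d => ⟨d.toProd, d.adj⟩, fun _ => rfl, fun _ => rfl⟩

section

open GV

def GV.equivSum : GV n ≃ Fin n ⊕ Fin n ⊕ Fin n ⊕ Fin n ⊕ Fin n × Fin n where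
  toFun
    | A i => .inl i
    | B i => .inr (.inl i)
    | C i => .inr (.inr (.inl i))
    | D i => .inr (.inr (.inr (.inl i)))
    | U i j => .inr (.inr (.inr (.inr (i, j))))
  invFun
    | .inl i => A i
    | .inr (.inl i) => B i
    | .inr (.inr (.inl i)) => C i
    | .inr (.inr (.inr (.inl i))) => D i
    | .inr (.inr (.inr (.inr (i, j)))) => U i j
  left_inv x := by cases x <;> rfl
  right_inv s := by rcases s with i | i | i | i | ⟨i, j⟩ <;> rfl

theorem GV.sum_univ_eq {β : Type*} [AddCommMonoid β] (f : GV n → β) :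
    ∑ x, f x = ∑ i, (f (A i) + f (B i) + f (C i) + f (D i)) +
      ∑ p : Fin n × Fin n, f (U p.1 p.2) := by
  rw [← GV.equivSum.symm.sum_comp]
  simp [Fintype.sum_sum_type, GV.equivSum, Finset.sum_add_distrib, add_assoc]

end

namespace GofH

open RoommatesInstance GV Finset

variable {H : SimpleGraph (Fin n)}

@[simp] theorem adj_A {i : Fin n} {x : GV n} :
    (GofH H).adj (A i) x ↔ x = B i ∨ x = C i ∨ x = D i := by
  cases x <;> simp [GofH, grel, eq_comm]

@[simp] theorem adj_B {i : Fin n} {x : GV n} :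
    (GofH H).adj (B i) x ↔ x = A i ∨ x = C i ∨ ∃ j, x = U i j ∧ H.Adj i j := by
  cases x <;> simp [GofH, grel, eq_comm]

@[simp] theorem adj_C {i : Fin n} {x : GV n} :
    (GofH H).adj (C i) x ↔ x = A i ∨ x = B i := by
  cases x <;> simp [GofH, grel, eq_comm]

@[simp] theorem adj_D {i : Fin n} {x : GV n} :
    (GofH H).adj (D i) x ↔ x = A i := by
  cases x <;> simp [GofH, grel, eq_comm]

@[simp] theorem adj_U {i j : Fin n} {x : GV n} :
    (GofH H).adj (U i j) x ↔ H.Adj i j ∧ (x = U j i ∨ x = B i) := by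
  cases x <;> simp [GofH, grel, eq_comm] <;> grind [SimpleGraph.Adj.symm, SimpleGraph.Adj.ne]

@[simp] theorem pref_iff {u v w : GV n} :
    (GofH H).pref u v w ↔ (GofH H).adj u v ∧ (GofH H).adj u w ∧ grank u v < grank u w :=
  Iff.rfl

theorem pref_asymm (u v w : GV n) : (GofH H).pref u v w → ¬ (GofH H).pref u w v := by
  simp only [pref_iff]
  omega

theorem m_U_of_not_adj (M : (GofH H).Matching) {i j : Fin n} (h : ¬ H.Adj i j) :
    M.m (U i j) = U i j :=
  (M.m_eq_self_or_adj _).resolve_right (by simp [h])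

section CoverMatching

variable (K : Finset (Fin n))

variable (H) in
noncomputable def coverMatching : (GofH H).Matching where
  m
    | A i => if i ∈ K then B i else D i
    | B i => if i ∈ K then A i else C i
    | C i => if i ∈ K then C i else B i
    | D i => if i ∈ K then D i else A i
    | U i j => if H.Adj i j then U j i else U i j
  invol := by
    rintro (i | i | i | i | ⟨i, j⟩) <;> dsimp only <;> split_ifs <;>
      simp_all [SimpleGraph.adj_comm]
  adj_of_ne := by
    rintro (i | i | i | i | ⟨i, j⟩) <;> dsimp only <;> split_ifs <;> simp_all

noncomputable def gadgetGain (M' : (GofH H).Matching) (i j : Fin n) : ℤ :=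
  if i ∉ K ∧ M'.m (B i) = U i j then 2 else 0

theorem gadget_vote_le_sum_gadgetGain (M' : (GofH H).Matching) (i : Fin n) :
    (GofH H).vote (coverMatching H K) (A i) (M'.m (A i)) +
      (GofH H).vote (coverMatching H K) (B i) (M'.m (B i)) +
      (GofH H).vote (coverMatching H K) (C i) (M'.m (C i)) +
      (GofH H).vote (coverMatching H K) (D i) (M'.m (D i)) ≤ ∑ j, gadgetGain K M' i j := by
  have iA := M'.invol (A i)
  have iB := M'.invol (B i)
  have iC := M'.invol (C i)
  have iD := M'.invol (D i)
  rcases (M'.m_eq_self_or_adj (A i)).imp_right adj_A.1 with hA | hA | hA | hA <;>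
  rcases (M'.m_eq_self_or_adj (B i)).imp_right adj_B.1 with hB | hB | hB | ⟨j, hB, hij⟩ <;>
  rcases (M'.m_eq_self_or_adj (C i)).imp_right adj_C.1 with hC | hC | hC <;>
  rcases (M'.m_eq_self_or_adj (D i)).imp_right adj_D.1 with hD | hD <;>
  by_cases hi : i ∈ K <;>
  simp_all [gadgetGain, vote, Better, coverMatching, grank]

theorem gadgetGain_add_vote_U_le (hK : ∀ i j, H.Adj i j → i ∈ K ∨ j ∈ K)
    (M' : (GofH H).Matching) (i j : Fin n) :
    gadgetGain K M' i j + gadgetGain K M' j i +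
      (GofH H).vote (coverMatching H K) (U i j) (M'.m (U i j)) +
      (GofH H).vote (coverMatching H K) (U j i) (M'.m (U j i)) ≤ 0 := by
  simp only [gadgetGain, M'.m_eq_comm (u := B i), M'.m_eq_comm (u := B j)]
  by_cases hadj : H.Adj i j
  · have hne := hadj.ne
    have hadj' := hadj.symm
    have hcov := hK i j hadj
    rcases (M'.m_eq_self_or_adj (U i j)).imp_right adj_U.1 with hU | ⟨-, hU | hU⟩ <;>
    rcases (M'.m_eq_self_or_adj (U j i)).imp_right adj_U.1 with hU' | ⟨-, hU' | hU'⟩ <;>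
    have iU := M'.m_eq_comm.1 hU <;> have iU' := M'.m_eq_comm.1 hU' <;>
    by_cases hi : i ∈ K <;> by_cases hj : j ∈ K <;>
    simp_all [vote, Better, coverMatching, grank]
  · simp [m_U_of_not_adj M' hadj, m_U_of_not_adj M' (hadj ∘ SimpleGraph.Adj.symm), vote, Better,
      coverMatching, hadj, H.adj_comm]

theorem popular_coverMatching (hK : ∀ i j, H.Adj i j → i ∈ K ∨ j ∈ K) :
    (GofH H).Popular (coverMatching H K) := by
  refine (popular_iff_sum_vote_nonpos pref_asymm _).2 fun M' => ?_
  rw [GV.sum_univ_eq]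
  calc _ ≤ ∑ i, ∑ j, gadgetGain K M' i j +
        ∑ p : Fin n × Fin n, (GofH H).vote (coverMatching H K) (U p.1 p.2) (M'.m (U p.1 p.2)) :=
        add_le_add_left (sum_le_sum fun i _ => gadget_vote_le_sum_gadgetGain K M' i) _
    _ = ∑ p : Fin n × Fin n, (gadgetGain K M' p.1 p.2 +
          (GofH H).vote (coverMatching H K) (U p.1 p.2) (M'.m (U p.1 p.2))) := by
        rw [← Fintype.sum_prod_type', sum_add_distrib]
    _ ≤ 0 := sum_nonpos_of_add_swap_nonpos fun p => by
        simp only [Prod.fst_swap, Prod.snd_swap]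
        linarith [gadgetGain_add_vote_U_le K hK M' p.1 p.2]

end CoverMatching

def IsStandard (M : (GofH H).Matching) : Prop :=
  (∀ i, M.m (A i) = B i ∨ M.m (A i) = D i ∧ M.m (B i) = C i) ∧
    ∀ i j, H.Adj i j → M.m (U i j) = U j i

noncomputable def coverOf (M : (GofH H).Matching) : Finset (Fin n) :=
  univ.filter fun i => M.m (A i) = B i

theorem msize_of_isStandard [DecidableRel H.Adj] {M : (GofH H).Matching} (hM : IsStandard M) :
    (GofH H).msize M = #H.edgeFinset + 2 * n - #(coverOf M) := by
  have hgadget : ∀ i, (if M.m (A i) ≠ A i then 1 else 0) + (if M.m (B i) ≠ B i then 1 else 0) +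
      (if M.m (C i) ≠ C i then 1 else 0) + (if M.m (D i) ≠ D i then 1 else 0) =
      if M.m (A i) = B i then 2 else 4 := by
    intro i
    have iA := M.invol (A i)
    have iB := M.invol (B i)
    have iC := M.invol (C i)
    have iD := M.invol (D i)
    rcases (M.m_eq_self_or_adj (C i)).imp_right adj_C.1 with hC | hC | hC <;>
    rcases (M.m_eq_self_or_adj (D i)).imp_right adj_D.1 with hD | hD <;>
    rcases hM.1 i with h | ⟨h, h'⟩ <;> simp_all
  have hU : ∀ p : Fin n × Fin n,
      (if M.m (U p.1 p.2) ≠ U p.1 p.2 then 1 else 0) = if H.Adj p.1 p.2 then 1 else 0 := by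
    rintro ⟨i, j⟩
    by_cases hij : H.Adj i j
    · simp [hM.2 i j hij, hij, hij.ne']
    · simp [m_U_of_not_adj M hij, hij]
  have hcard := card_filter_add_card_filter_not (s := univ) fun i => M.m (A i) = B i
  have hsum : #(univ.filter fun u => M.m u ≠ u) =
      2 * #(coverOf M) + 4 * (n - #(coverOf M)) + 2 * #H.edgeFinset := by
    rw [card_filter, GV.sum_univ_eq]
    simp only [hgadget, hU, sum_ite, sum_const, smul_eq_mul,
      ← H.card_filter_adj_eq_two_mul_card_edgeFinset]
    simp only [card_univ, Fintype.card_fin] at hcard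
    simp only [mul_one, mul_zero, add_zero, coverOf]
    omega
  have hc : #(coverOf M) ≤ n := by simpa using card_le_univ (coverOf M)
  rw [msize, filter_congr_decidable, hsum]
  omega

theorem isStandard_coverMatching (K : Finset (Fin n)) : IsStandard (coverMatching H K) := by
  refine ⟨fun i => ?_, fun i j hij => by simp [coverMatching, hij]⟩
  by_cases hi : i ∈ K <;> simp [coverMatching, hi]

theorem coverOf_coverMatching (K : Finset (Fin n)) : coverOf (coverMatching H K) = K := by
  ext i
  by_cases hi : i ∈ K <;> simp [coverOf, coverMatching, hi]

theorem not_popular_of_m_A_eq_C_of_m_B_eq_U {M : (GofH H).Matching} {i j : Fin n}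
    (hA : M.m (A i) = C i) (hB : M.m (B i) = U i j) (hU : M.m (U j i) = B j) :
    ¬ (GofH H).Popular M := by
  have hij : H.Adj i j := by simpa [hB] using M.adj_of_ne (B i) (by simp [hB])
  have hne := hij.ne
  have hji := hij.symm
  have hC := M.m_eq_comm.1 hA
  have hUij := M.m_eq_comm.1 hB
  have hBj := M.m_eq_comm.1 hU
  refine not_popular_of_rematch pref_asymm (s := {C i, A i, B i, U i j, U j i, B j})
    (f := Equiv.swap (A i) (B i) ∘ Equiv.swap (U i j) (U j i)) ?_ ?_ ?_
  · simp [hA, hB, hU, hC, hUij, hBj]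
  · simp [Equiv.swap_apply_def, hne, hne.symm, hij, hji]
  · simp [Finset.sum_insert, hne, hne.symm, vote, Better, grank, hA, hB, hU, hC, hUij, hBj, hij,
      hji, Equiv.swap_apply_def]

theorem not_popular_of_uncovered_edge {M : (GofH H).Matching} {i j : Fin n} (hij : H.Adj i j)
    (hAi : M.m (A i) = D i) (hBi : M.m (B i) = C i) (hAj : M.m (A j) = D j)
    (hBj : M.m (B j) = C j) (hUij : M.m (U i j) = U j i) (hUji : M.m (U j i) = U i j) :
    ¬ (GofH H).Popular M := by
  have hne := hij.ne
  have hji := hij.symm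
  have hDi := M.m_eq_comm.1 hAi
  have hCi := M.m_eq_comm.1 hBi
  have hDj := M.m_eq_comm.1 hAj
  have hCj := M.m_eq_comm.1 hBj
  refine not_popular_of_rematch pref_asymm
    (s := {D i, A i, C i, B i, U i j, U j i, B j, C j, A j, D j})
    (f := Equiv.swap (A i) (C i) ∘ Equiv.swap (B i) (U i j) ∘ Equiv.swap (B j) (U j i) ∘
      Equiv.swap (A j) (C j)) ?_ ?_ ?_
  · simp [hAi, hBi, hAj, hBj, hUij, hUji, hDi, hCi, hDj, hCj]
  · simp [Equiv.swap_apply_def, hne, hne.symm, hij, hji]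
  · simp [Finset.sum_insert, hne, hne.symm, vote, Better, grank, hAi, hBi, hAj, hBj, hUij, hUji,
      hDi, hCi, hDj, hCj, hij, hji, Equiv.swap_apply_def]

section Popular

variable {M : (GofH H).Matching} (hpop : (GofH H).Popular M)
include hpop

theorem gadget_of_popular (i : Fin n) : M.m (A i) = B i ∨ M.m (A i) = D i ∧ M.m (B i) = C i := by
  have hblock : ∀ x y, (GofH H).Blocks M x y → M.m y ≠ y := fun x y hxy hy =>
    not_popular_of_blocks_of_unmatched pref_asymm hxy hy hpop
  rcases (M.m_eq_self_or_adj (A i)).imp_right adj_A.1 with hA | hA | hA | hA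
  · have hD : M.m (D i) = D i := M.m_eq_self_of_forall_adj (by simp [hA])
    exact absurd hD (hblock (A i) (D i) (by simp [Blocks, Better, hA, hD]))
  · exact Or.inl hA
  · rcases (M.m_eq_self_or_adj (B i)).imp_right adj_B.1 with hB | hB | hB | ⟨j, hB, hij⟩
    · exact absurd hB (hblock (A i) (B i) (by simp [Blocks, Better, hA, hB, grank]))
    · simp [M.m_eq_comm.1 hB] at hA
    · simpa using (M.m_eq_comm.1 hB).symm.trans (M.m_eq_comm.1 hA)
    · have hUij := M.m_eq_comm.1 hB
      rcases (M.m_eq_self_or_adj (U j i)).imp_right adj_U.1 with hU | ⟨hji, hU | hU⟩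
      · exact absurd hU (hblock (U i j) (U j i)
          (by simp [Blocks, Better, hUij, hU, grank, hij, hij.ne, hij.ne']))
      · simp [M.m_eq_comm.1 hU] at hUij
      · exact (not_popular_of_m_A_eq_C_of_m_B_eq_U hA hB hU hpop).elim
  · rcases (M.m_eq_self_or_adj (B i)).imp_right adj_B.1 with hB | hB | hB | ⟨j, hB, -⟩
    · exact absurd hB (hblock (A i) (B i) (by simp [Blocks, Better, hA, hB, grank]))
    · simp [M.m_eq_comm.1 hB] at hA
    · exact Or.inr ⟨hA, hB⟩
    · have hC : M.m (C i) = C i := M.m_eq_self_of_forall_adj (by simp [hA, hB])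
      exact absurd hC (hblock (A i) (C i) (by simp [Blocks, Better, hA, hC, grank]))

theorem m_B_ne_U_of_popular (i j : Fin n) : M.m (B i) ≠ U i j := by
  rcases gadget_of_popular hpop i with h | ⟨-, h⟩
  · simp [M.m_eq_comm.1 h]
  · simp [h]

theorem m_U_of_popular {i j : Fin n} (hij : H.Adj i j) : M.m (U i j) = U j i := by
  rcases (M.m_eq_self_or_adj (U i j)).imp_right adj_U.1 with hU | ⟨-, hU | hU⟩
  · have hU' : M.m (U j i) = U j i := M.m_eq_self_of_forall_adj fun v hv => by
      rcases adj_U.1 hv with ⟨-, rfl | rfl⟩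
      · simp [hU, hij.ne]
      · exact m_B_ne_U_of_popular hpop j i
    exact (not_popular_of_blocks_of_unmatched pref_asymm (x := U i j)
      (by simp [Blocks, Better, hU, hU', grank, hij, hij.symm, hij.ne, hij.ne']) hU' hpop).elim
  · exact hU
  · exact absurd (M.m_eq_comm.1 hU) (m_B_ne_U_of_popular hpop i j)

theorem isStandard_of_popular : IsStandard M :=
  ⟨gadget_of_popular hpop, fun _ _ => m_U_of_popular hpop⟩

theorem isCover_coverOf_of_popular {i j : Fin n} (hij : H.Adj i j) :
    i ∈ coverOf M ∨ j ∈ coverOf M := by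
  by_contra! h
  simp only [coverOf, mem_filter, mem_univ, true_and] at h
  obtain ⟨hAi, hBi⟩ := (gadget_of_popular hpop i).resolve_left h.1
  obtain ⟨hAj, hBj⟩ := (gadget_of_popular hpop j).resolve_left h.2
  exact not_popular_of_uncovered_edge hij hAi hBi hAj hBj (m_U_of_popular hpop hij)
    (m_U_of_popular hpop hij.symm) hpop

end Popular

end GofH

open RoommatesInstance in
theorem vertexCover_iff_large_popular_general {n : ℕ} (H : SimpleGraph (Fin n))
    [DecidableRel H.Adj] (k : ℕ) (hkn : k ≤ n) :
    (∃ C : Finset (Fin n), (∀ i j, H.Adj i j → i ∈ C ∨ j ∈ C) ∧ C.card = k) ↔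
      ∃ M : (GofH H).Matching, (GofH H).Popular M ∧
        H.edgeFinset.card + 2 * n - k ≤ (GofH H).msize M := by
  constructor
  · rintro ⟨K, hK, rfl⟩
    refine ⟨GofH.coverMatching H K, GofH.popular_coverMatching K hK, ?_⟩
    rw [GofH.msize_of_isStandard (GofH.isStandard_coverMatching K), GofH.coverOf_coverMatching]
  · rintro ⟨M, hpop, hsize⟩
    have hcov : (GofH.coverOf M).card ≤ k := by
      have := Finset.card_le_univ (GofH.coverOf M)
      rw [GofH.msize_of_isStandard (GofH.isStandard_of_popular hpop)] at hsize
      simp only [Fintype.card_fin] at this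
      omega
    obtain ⟨K, hsub, hK⟩ := Finset.exists_superset_card_eq hcov (by simpa using hkn)
    exact ⟨K, fun i j hij => (GofH.isCover_coverOf_of_popular hpop hij).imp (@hsub i) (@hsub j),
      hK⟩

open RoommatesInstance in
/-- For every `1 ≤ k ≤ n_H`, the graph `H` admits a vertex cover of
size `k` iff `G` admits a popular matching of size at least `m_H + 2 n_H - k`. -/
theorem vertexCover_iff_large_popular {n : ℕ} (H : SimpleGraph (Fin n))
    [DecidableRel H.Adj] (k : ℕ) (hk1 : 1 ≤ k) (hkn : k ≤ n) :
    (∃ C : Finset (Fin n), (∀ i j, H.Adj i j → i ∈ C ∨ j ∈ C) ∧ C.card = k) ↔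
      ∃ M : (GofH H).Matching, (GofH H).Popular M ∧
        H.edgeFinset.card + 2 * n - k ≤ (GofH H).msize M :=
  vertexCover_iff_large_popular_general H k hkn
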